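/- Let P be a stratified choice program, let P_i denote the rules of P whose heads are in stratum i, and let P_i* be the union of all P_j for j ≤ i. If M_i is a stable model of P_i*, then every stable model of M_i ∪ P_{i+1} is a stable model of P_{i+1}*. Consequently, the stable models of a stratified choice program can be computed by an iterated choice fixpoint procedure that computes a choice model stratum by stratum. -/

import Mathlib

/-!
# STATEMENT 5

Let `P` be a stratified choice program, let `Pᵢ` denote the rules of `P` whose
heads are in stratum `i`, and let `Pᵢ*` be the union of all `Pⱼ` for `j ≤ i`.
If `Mᵢ` is a stable model of `Pᵢ*`, then every stable model of `Mᵢ ∪ P_{i+1}`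
is a stable model of `P_{i+1}*`.  Consequently, the stable models of a
stratified choice program can be computed by an iterated choice fixpoint
procedure that computes a choice model stratum by stratum.

A choice program with negated goals is *stratified* when the program obtained
by removing its choice goals is stratified with respect to negation.  The
(stable-model) semantics of a choice (sub)program is that of its first-order
equivalent, obtained by the standard `chosen`/`diffChoice` rewriting; the
framework is as in Statement 0.  So that the subprograms `Pᵢ*` of a program
`P` share the same `chosen_r`/`diffChoice_r` vocabulary, the first-order
equivalent is parametrized by the set of rule positions that are kept.
-/

/-- A ground normal logic-program rule over ground atoms `α`. -/
structure GRule (α : Type) where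
  head : α
  pos : Set α
  neg : Set α

/-- A ground normal logic program is a set of ground rules. -/
abbrev GProgram (α : Type) := Set (GRule α)

/-- `M` satisfies a ground rule. -/
def GRule.Sat {α : Type} (r : GRule α) (M : Set α) : Prop :=
  r.pos ⊆ M → (∀ a ∈ r.neg, a ∉ M) → r.head ∈ M

/-- `M` is a model of (i.e. closed under) the program `P`. -/
def IsModel {α : Type} (P : GProgram α) (M : Set α) : Prop := ∀ r ∈ P, r.Sat M

/-- The Gelfond–Lifschitz reduct of `P` with respect to `M`: delete every rule
whose negative body intersects `M`, and delete the negative bodies of the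
remaining rules. -/
def reduct {α : Type} (P : GProgram α) (M : Set α) : GProgram α :=
  {r | ∃ r' ∈ P, (∀ a ∈ r'.neg, a ∉ M) ∧ r = ⟨r'.head, r'.pos, ∅⟩}

/-- The least (Herbrand) model of a program: the intersection of all models. -/
def leastModel {α : Type} (P : GProgram α) : Set α := ⋂₀ {N | IsModel P N}

/-- `M` is a (total, two-valued) stable model of `P` in the sense of
Gelfond–Lifschitz: `M` is the least model of the reduct of `P` by `M`.
Every such model is total: each atom is either true (in `M`) or false. -/
def IsStableModel {α : Type} (P : GProgram α) (M : Set α) : Prop :=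
  M = leastModel (reduct P M)

/-! ## Datalog with choice goals -/

/-- Terms: variables (named by naturals) and constants from `C`. -/
inductive Term (C : Type) where
  | var (v : ℕ)
  | const (c : C)

/-- A relational schema: predicate symbols with arities. -/
structure Schema where
  pred : Type
  ar : pred → ℕ

/-- A (possibly non-ground) atom over schema `S` and constants `C`. -/
structure Atom (S : Schema) (C : Type) where
  p : S.pred
  args : Fin (S.ar p) → Term C

/-- A ground atom. -/
structure GAtom (S : Schema) (C : Type) where
  p : S.pred
  args : Fin (S.ar p) → C

/-- A Datalog rule whose body may additionally contain choice goals
`choice((X),(Y))`, recorded in `cgoals` as pairs `(X, Y)` of disjoint lists of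
variables, with nonempty right side `Y`. -/
structure CRule (S : Schema) (C : Type) where
  head : Atom S C
  pos : List (Atom S C)
  neg : List (Atom S C)
  cgoals : List (List ℕ × List ℕ)
  cgoals_disjoint : ∀ g ∈ cgoals, ∀ v ∈ g.1, v ∉ g.2
  cgoals_right_ne : ∀ g ∈ cgoals, g.2 ≠ []

/-- A choice program: a finite list of rules, possibly with choice goals. -/
abbrev CProgram (S : Schema) (C : Type) := List (CRule S C)

/-- A choice program is *positive* when its non-choice goals contain no
negation. -/
def CProgram.Positive {S : Schema} {C : Type} (P : CProgram S C) : Prop :=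
  ∀ r ∈ P, r.neg = []

def Term.eval {C : Type} (ν : ℕ → C) : Term C → C
  | .var v => ν v
  | .const c => c

def Atom.ground {S : Schema} {C : Type} (a : Atom S C) (ν : ℕ → C) : GAtom S C :=
  ⟨a.p, fun i => (a.args i).eval ν⟩

/-- `W`: the list of all variables occurring in the choice goals of a rule. -/
def CRule.W {S : Schema} {C : Type} (r : CRule S C) : List ℕ :=
  (r.cgoals.flatMap fun g => g.1 ++ g.2).dedup

/-- Atoms of the first-order equivalent `foe(P)`: the original (base) atoms
together with `chosen_r` and `diffChoice_r` atoms for each choice rule `r`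
(rules are referred to by their position in the program). -/
inductive FAtom (S : Schema) (C : Type) where
  | base (a : GAtom S C)
  | chosen (r : ℕ) (w : List C)
  | diff (r : ℕ) (w : List C)

/-- The (ground) positive body of an instantiated rule, as base atoms. -/
def posBody {S : Schema} {C : Type} (r : CRule S C) (ν : ℕ → C) : Set (FAtom S C) :=
  {x | ∃ a ∈ r.pos, x = FAtom.base (a.ground ν)}

/-- The (ground) negative body of an instantiated rule, as base atoms. -/
def negBody {S : Schema} {C : Type} (r : CRule S C) (ν : ℕ → C) : Set (FAtom S C) :=
  {x | ∃ a ∈ r.neg, x = FAtom.base (a.ground ν)}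


/-- The first-order equivalent of the subprogram of `P` consisting of the
rules at the positions in `keep`, together with the database `edb`
(`chosen`/`diffChoice` atoms are indexed by the position of their rule in the
full program `P`, so that all subprograms share one vocabulary). -/
def foeOn {S : Schema} {C : Type} (P : CProgram S C) (keep : Set ℕ)
    (edb : Set (GAtom S C)) : GProgram (FAtom S C) :=
  {r | ∃ a ∈ edb, r = ⟨FAtom.base a, ∅, ∅⟩} ∪
  {r | ∃ i : Fin P.length, (i : ℕ) ∈ keep ∧ ∃ ν : ℕ → C, (P.get i).cgoals = [] ∧
        r = ⟨FAtom.base ((P.get i).head.ground ν), posBody (P.get i) ν,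
             negBody (P.get i) ν⟩} ∪
  {r | ∃ i : Fin P.length, (i : ℕ) ∈ keep ∧ ∃ ν : ℕ → C, (P.get i).cgoals ≠ [] ∧
        r = ⟨FAtom.base ((P.get i).head.ground ν),
             insert (FAtom.chosen i ((P.get i).W.map ν)) (posBody (P.get i) ν),
             negBody (P.get i) ν⟩} ∪
  {r | ∃ i : Fin P.length, (i : ℕ) ∈ keep ∧ ∃ ν : ℕ → C, (P.get i).cgoals ≠ [] ∧
        r = ⟨FAtom.chosen i ((P.get i).W.map ν), posBody (P.get i) ν,
             insert (FAtom.diff i ((P.get i).W.map ν)) (negBody (P.get i) ν)⟩} ∪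
  {r | ∃ i : Fin P.length, (i : ℕ) ∈ keep ∧ ∃ g ∈ (P.get i).cgoals, ∃ ν ν' : ℕ → C,
        (∀ v ∈ g.1, ν v = ν' v) ∧ (∃ v ∈ g.2, ν v ≠ ν' v) ∧
        r = ⟨FAtom.diff i ((P.get i).W.map ν),
             {FAtom.chosen i ((P.get i).W.map ν')}, ∅⟩}

/-- The first-order equivalent `foe(P)` of the whole choice program. -/
def foe {S : Schema} {C : Type} (P : CProgram S C) (edb : Set (GAtom S C)) :
    GProgram (FAtom S C) :=
  foeOn P Set.univ edb

/-- `σ` is a stratification of the choice program `P` (the choice goals being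
ignored): positive goals lie in strata no higher than the head's, negated
goals in strictly lower strata. -/
def StratifiedBy {S : Schema} {C : Type} (P : CProgram S C) (σ : S.pred → ℕ) : Prop :=
  ∀ r ∈ P, (∀ a ∈ r.pos, σ a.p ≤ σ r.head.p) ∧ (∀ a ∈ r.neg, σ a.p < σ r.head.p)

/-- The positions of the rules of `P` whose head predicate is in a stratum
`≤ i` with respect to `σ`. -/
def strataLE {S : Schema} {C : Type} (P : CProgram S C) (σ : S.pred → ℕ) (i : ℕ) :
    Set ℕ :=
  {j | ∃ h : j < P.length, σ ((P.get ⟨j, h⟩).head.p) ≤ i}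

/-- The positions of the rules of `P` whose head predicate is in stratum
exactly `i`. -/
def strataEq {S : Schema} {C : Type} (P : CProgram S C) (σ : S.pred → ℕ) (i : ℕ) :
    Set ℕ :=
  {j | ∃ h : j < P.length, σ ((P.get ⟨j, h⟩).head.p) = i}

/-- `Pᵢ*`: the first-order equivalent of the subprogram of `P` consisting of
the database and the rules of the strata `≤ i`. -/
def Pstar {S : Schema} {C : Type} (P : CProgram S C) (σ : S.pred → ℕ)
    (edb : Set (GAtom S C)) (i : ℕ) : GProgram (FAtom S C) :=
  foeOn P (strataLE P σ i) edb

/-- `P_{i}` (alone): the first-order equivalent of the rules of stratum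
exactly `i`, without the database. -/
def Ponly {S : Schema} {C : Type} (P : CProgram S C) (σ : S.pred → ℕ) (i : ℕ) :
    GProgram (FAtom S C) :=
  foeOn P (strataEq P σ i) ∅

/-- A set `M` of atoms regarded as a program of facts. -/
def ofFacts {α : Type} (M : Set α) : GProgram α := {r | ∃ a ∈ M, r = ⟨a, ∅, ∅⟩}

/-!
The splitting-set argument of Lifschitz and Turner.  Rank every atom of the first-order
equivalent by a stratum: a base atom by its predicate, `chosen_r` and `diffChoice_r` by the
head of rule `r`.  Stratification makes every body atom of `Pᵢ*` have stratum `≤ i`, while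
every head of `P_{i+1}` has stratum `i + 1`.  The atoms of stratum `≤ i` thus form a splitting
set of `P_{i+1}* = Pᵢ* ∪ P_{i+1}`: a stable model `M` of `Mᵢ ∪ P_{i+1}` agrees with `Mᵢ` below
stratum `i + 1`, so the reduct of `Pᵢ*` by `M` is its reduct by `Mᵢ`, and the least models of
the two reducts coincide.  Iterating over the strata reaches `P_k* = foe(P)` once `k` bounds
all strata.
-/

section GroundPrograms

variable {α : Type} {P Q : GProgram α} {M N : Set α}

lemma leastModel_subset (h : IsModel P N) : leastModel P ⊆ N :=
  Set.sInter_subset_of_mem h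

lemma IsModel.mono (hPQ : P ⊆ Q) (h : IsModel Q M) : IsModel P M :=
  fun r hr => h r (hPQ hr)

lemma leastModel_mono (hPQ : P ⊆ Q) : leastModel P ⊆ leastModel Q :=
  Set.sInter_subset_sInter fun _ hN => hN.mono hPQ

lemma isModel_union : IsModel (P ∪ Q) M ↔ IsModel P M ∧ IsModel Q M :=
  ⟨fun h => ⟨h.mono Set.subset_union_left, h.mono Set.subset_union_right⟩,
    fun ⟨hP, hQ⟩ r hr => hr.elim (hP r) (hQ r)⟩

lemma isModel_ofFacts : IsModel (ofFacts N) M ↔ N ⊆ M := by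
  constructor
  · intro h a ha
    exact h _ ⟨a, ha, rfl⟩ (Set.empty_subset _) (fun _ hb => hb.elim)
  · rintro h r ⟨a, ha, rfl⟩ - -
    exact h ha

lemma isModel_leastModel (hP : ∀ r ∈ P, r.neg = ∅) : IsModel P (leastModel P) := by
  intro r hr hpos _ N hN
  refine hN r hr (hpos.trans (Set.sInter_subset_of_mem hN)) ?_
  simp [hP r hr]

lemma neg_eq_empty_of_mem_reduct {r : GRule α} (hr : r ∈ reduct P M) : r.neg = ∅ := by
  obtain ⟨r', -, -, rfl⟩ := hr
  rfl

lemma reduct_union : reduct (P ∪ Q) M = reduct P M ∪ reduct Q M := by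
  ext r
  simp only [reduct, Set.mem_union, Set.mem_ofPred_eq, or_and_right, exists_or]

lemma reduct_ofFacts : reduct (ofFacts N) M = ofFacts N := by
  ext r
  constructor
  · rintro ⟨r', ⟨a, ha, rfl⟩, -, rfl⟩
    exact ⟨a, ha, rfl⟩
  · rintro ⟨a, ha, rfl⟩
    exact ⟨⟨a, ∅, ∅⟩, ⟨a, ha, rfl⟩, fun _ hb => hb.elim, rfl⟩

lemma reduct_congr (h : ∀ r ∈ P, ∀ a ∈ r.neg, (a ∈ M ↔ a ∈ N)) :
    reduct P M = reduct P N := by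
  ext r
  constructor
  · rintro ⟨r', hr', hneg, rfl⟩
    exact ⟨r', hr', fun a ha haN => hneg a ha ((h r' hr' a ha).mpr haN), rfl⟩
  · rintro ⟨r', hr', hneg, rfl⟩
    exact ⟨r', hr', fun a ha haM => hneg a ha ((h r' hr' a ha).mp haM), rfl⟩

lemma IsStableModel.isModel_reduct (h : IsStableModel P M) : IsModel (reduct P M) M := by
  have := isModel_leastModel fun _ (hr : _ ∈ reduct P M) => neg_eq_empty_of_mem_reduct hr
  rwa [← h] at this

lemma IsStableModel.subset_image_head (h : IsStableModel P M) : M ⊆ GRule.head '' P := by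
  refine h.subset.trans (leastModel_subset ?_)
  rintro _ ⟨r, hr, -, rfl⟩ - -
  exact ⟨r, hr, rfl⟩

/-- The splitting-set theorem of Lifschitz and Turner, for the splitting set `U`. -/
theorem IsStableModel.union_of_splitting {B T : GProgram α} {U : Set α} {Mb : Set α}
    (hB : ∀ r ∈ B, r.pos ∪ r.neg ⊆ U) (hT : ∀ r ∈ T, r.head ∉ U)
    (hMb : IsStableModel B Mb) (hM : IsStableModel (ofFacts Mb ∪ T) M) :
    IsStableModel (B ∪ T) M := by
  have hredM : reduct (ofFacts Mb ∪ T) M = ofFacts Mb ∪ reduct T M := by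
    rw [reduct_union, reduct_ofFacts]
  have hMmodel := hM.isModel_reduct
  rw [hredM, isModel_union, isModel_ofFacts] at hMmodel
  have hagree : M ∩ U ⊆ Mb := by
    rintro x ⟨hxM, hxU⟩
    obtain ⟨r, hr | hr, rfl⟩ := hM.subset_image_head hxM
    · obtain ⟨a, ha, rfl⟩ := hr
      exact ha
    · exact (hT r hr hxU).elim
  have hred : reduct B M = reduct B Mb := reduct_congr fun r hr a ha =>
    ⟨fun haM => hagree ⟨haM, hB r hr (Or.inr ha)⟩, fun haMb => hMmodel.1 haMb⟩
  unfold IsStableModel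
  rw [reduct_union, hred]
  apply Set.Subset.antisymm
  · have hQ := isModel_leastModel (P := reduct B Mb ∪ reduct T M) fun r hr =>
      hr.elim neg_eq_empty_of_mem_reduct neg_eq_empty_of_mem_reduct
    calc M = leastModel (ofFacts Mb ∪ reduct T M) := hM.trans (congrArg leastModel hredM)
      _ ⊆ _ := leastModel_subset <| isModel_union.2
        ⟨isModel_ofFacts.2 (hMb.subset.trans (leastModel_mono Set.subset_union_left)),
          hQ.mono Set.subset_union_right⟩
  · refine leastModel_subset (isModel_union.2 ⟨?_, hMmodel.2⟩)
    rintro _ ⟨r, hr, hneg, rfl⟩ hpos -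
    have hposMb : r.pos ⊆ Mb := fun x hx => hagree ⟨hpos hx, hB r hr (Or.inl hx)⟩
    exact hMmodel.1 (hMb.isModel_reduct _ ⟨r, hr, hneg, rfl⟩ hposMb fun _ ha => ha.elim)

end GroundPrograms

section Strata

variable {S : Schema} {C : Type} {P : CProgram S C} {σ : S.pred → ℕ} {edb : Set (GAtom S C)}

/-- The stratum of the head of rule number `j` (`0` for a position outside `P`, which no atom
of a first-order equivalent refers to). -/
def ruleStratum (P : CProgram S C) (σ : S.pred → ℕ) (j : ℕ) : ℕ :=
  if h : j < P.length then σ (P.get ⟨j, h⟩).head.p else 0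

def FAtom.stratum (P : CProgram S C) (σ : S.pred → ℕ) : FAtom S C → ℕ
  | .base a => σ a.p
  | .chosen j _ => ruleStratum P σ j
  | .diff j _ => ruleStratum P σ j

lemma ruleStratum_fin (j : Fin P.length) : ruleStratum P σ j = σ (P.get j).head.p :=
  dif_pos j.isLt

lemma foeOn_mono {keep keep' : Set ℕ} {edb' : Set (GAtom S C)}
    (hkeep : ∀ j : Fin P.length, (j : ℕ) ∈ keep → (j : ℕ) ∈ keep') (hedb : edb ⊆ edb') :
    foeOn P keep edb ⊆ foeOn P keep' edb' := by
  rintro r ((((⟨a, ha, hr⟩ | ⟨j, hj, hr⟩) | ⟨j, hj, hr⟩) | ⟨j, hj, hr⟩) | ⟨j, hj, hr⟩)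
  · exact Or.inl (Or.inl (Or.inl (Or.inl ⟨a, hedb ha, hr⟩)))
  · exact Or.inl (Or.inl (Or.inl (Or.inr ⟨j, hkeep j hj, hr⟩)))
  · exact Or.inl (Or.inl (Or.inr ⟨j, hkeep j hj, hr⟩))
  · exact Or.inl (Or.inr ⟨j, hkeep j hj, hr⟩)
  · exact Or.inr ⟨j, hkeep j hj, hr⟩

lemma foeOn_union (keep keep' : Set ℕ) :
    foeOn P (keep ∪ keep') edb = foeOn P keep edb ∪ foeOn P keep' ∅ := by
  refine Set.Subset.antisymm ?_ (Set.union_subset (foeOn_mono (fun _ => Or.inl) le_rfl)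
    (foeOn_mono (fun _ => Or.inr) (Set.empty_subset _)))
  rintro r ((((hr | ⟨j, hj | hj, hr⟩) | ⟨j, hj | hj, hr⟩) | ⟨j, hj | hj, hr⟩) | ⟨j, hj | hj, hr⟩)
  · exact Or.inl (Or.inl (Or.inl (Or.inl (Or.inl hr))))
  · exact Or.inl (Or.inl (Or.inl (Or.inl (Or.inr ⟨j, hj, hr⟩))))
  · exact Or.inr (Or.inl (Or.inl (Or.inl (Or.inr ⟨j, hj, hr⟩))))
  · exact Or.inl (Or.inl (Or.inl (Or.inr ⟨j, hj, hr⟩)))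
  · exact Or.inr (Or.inl (Or.inl (Or.inr ⟨j, hj, hr⟩)))
  · exact Or.inl (Or.inl (Or.inr ⟨j, hj, hr⟩))
  · exact Or.inr (Or.inl (Or.inr ⟨j, hj, hr⟩))
  · exact Or.inl (Or.inr ⟨j, hj, hr⟩)
  · exact Or.inr (Or.inr ⟨j, hj, hr⟩)

lemma head_stratum_of_mem_foeOn {keep : Set ℕ} {r : GRule (FAtom S C)}
    (hr : r ∈ foeOn P keep edb) :
    (∃ a ∈ edb, r = ⟨.base a, ∅, ∅⟩) ∨
      ∃ j : Fin P.length, (j : ℕ) ∈ keep ∧ r.head.stratum P σ = σ (P.get j).head.p := by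
  rcases hr with ((((hr | ⟨j, hj, ν, -, rfl⟩) | ⟨j, hj, ν, -, rfl⟩) | ⟨j, hj, ν, -, rfl⟩) |
      ⟨j, hj, -, -, ν, -, -, -, rfl⟩)
  · exact Or.inl hr
  · exact Or.inr ⟨j, hj, rfl⟩
  · exact Or.inr ⟨j, hj, rfl⟩
  · exact Or.inr ⟨j, hj, ruleStratum_fin j⟩
  · exact Or.inr ⟨j, hj, ruleStratum_fin j⟩

lemma stratum_le_of_mem_posBody (hstrat : StratifiedBy P σ) {j : Fin P.length} {ν : ℕ → C}
    {x : FAtom S C} (hx : x ∈ posBody (P.get j) ν) : x.stratum P σ ≤ σ (P.get j).head.p := by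
  obtain ⟨a, ha, rfl⟩ := hx
  exact (hstrat _ (List.get_mem P j)).1 a ha

lemma stratum_le_of_mem_negBody (hstrat : StratifiedBy P σ) {j : Fin P.length} {ν : ℕ → C}
    {x : FAtom S C} (hx : x ∈ negBody (P.get j) ν) : x.stratum P σ ≤ σ (P.get j).head.p := by
  obtain ⟨a, ha, rfl⟩ := hx
  exact ((hstrat _ (List.get_mem P j)).2 a ha).le

lemma body_stratum_le_of_mem_foeOn (hstrat : StratifiedBy P σ) {keep : Set ℕ}
    {r : GRule (FAtom S C)} (hr : r ∈ foeOn P keep edb)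
    {x : FAtom S C} (hx : x ∈ r.pos ∪ r.neg) : x.stratum P σ ≤ r.head.stratum P σ := by
  rcases hr with ((((⟨a, -, rfl⟩ | ⟨j, -, ν, -, rfl⟩) | ⟨j, -, ν, -, rfl⟩) | ⟨j, -, ν, -, rfl⟩) |
      ⟨j, -, -, -, ν, ν', -, -, rfl⟩)
  · simp at hx
  all_goals simp only [FAtom.stratum, ruleStratum_fin]
  · rcases hx with hx | hx
    · exact stratum_le_of_mem_posBody hstrat hx
    · exact stratum_le_of_mem_negBody hstrat hx
  · rcases hx with (rfl | hx) | hx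
    · exact (ruleStratum_fin j).le
    · exact stratum_le_of_mem_posBody hstrat hx
    · exact stratum_le_of_mem_negBody hstrat hx
  · rcases hx with hx | rfl | hx
    · exact stratum_le_of_mem_posBody hstrat hx
    · exact (ruleStratum_fin j).le
    · exact stratum_le_of_mem_negBody hstrat hx
  · rcases hx with rfl | hx
    · exact (ruleStratum_fin j).le
    · exact hx.elim

lemma body_stratum_le_of_mem_Pstar (hstrat : StratifiedBy P σ) {i : ℕ} {r : GRule (FAtom S C)}
    (hr : r ∈ Pstar P σ edb i) : r.pos ∪ r.neg ⊆ {x | x.stratum P σ ≤ i} := by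
  intro x hx
  rcases head_stratum_of_mem_foeOn (σ := σ) hr with ⟨a, -, rfl⟩ | ⟨j, ⟨_, hj⟩, hhead⟩
  · simp at hx
  · exact (body_stratum_le_of_mem_foeOn hstrat hr hx).trans (hhead.trans_le hj)

lemma head_stratum_of_mem_Ponly {i : ℕ} {r : GRule (FAtom S C)} (hr : r ∈ Ponly P σ i) :
    r.head.stratum P σ = i := by
  rcases head_stratum_of_mem_foeOn (σ := σ) hr with ⟨a, ha, -⟩ | ⟨j, ⟨_, hj⟩, hhead⟩
  · exact ha.elim
  · exact hhead.trans hj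

lemma strataLE_succ (i : ℕ) :
    strataLE P σ (i + 1) = strataLE P σ i ∪ strataEq P σ (i + 1) := by
  ext j
  simp only [strataLE, strataEq, Set.mem_union, Set.mem_ofPred_eq, ← exists_or,
    Nat.le_succ_iff_eq_or_le, or_comm]

lemma Pstar_succ_eq_union (i : ℕ) :
    Pstar P σ edb (i + 1) = Pstar P σ edb i ∪ Ponly P σ (i + 1) := by
  rw [Pstar, strataLE_succ, foeOn_union, Pstar, Ponly]

lemma foe_eq_Pstar {k : ℕ} (hk : ∀ r ∈ P, σ r.head.p ≤ k) : foe P edb = Pstar P σ edb k :=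
  Set.Subset.antisymm
    (foeOn_mono (fun j _ => ⟨j.isLt, hk _ (List.get_mem P j)⟩) le_rfl)
    (foeOn_mono (fun _ _ => Set.mem_univ _) le_rfl)

theorem IsStableModel.Pstar_succ (hstrat : StratifiedBy P σ) {i : ℕ} {Mi M : Set (FAtom S C)}
    (hMi : IsStableModel (Pstar P σ edb i) Mi)
    (hM : IsStableModel (ofFacts Mi ∪ Ponly P σ (i + 1)) M) :
    IsStableModel (Pstar P σ edb (i + 1)) M := by
  rw [Pstar_succ_eq_union]
  refine hMi.union_of_splitting (U := {x | x.stratum P σ ≤ i})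
    (fun r hr => body_stratum_le_of_mem_Pstar hstrat hr)
    (fun r hr hle => Nat.not_succ_le_self i ((head_stratum_of_mem_Ponly hr).symm.trans_le hle)) hM

end Strata

theorem stratified_choice_program_iterated_fixpoint_general
    {S : Schema} {C : Type}
    (P : CProgram S C) (σ : S.pred → ℕ) (hstrat : StratifiedBy P σ)
    (edb : Set (GAtom S C)) :
    (∀ i : ℕ, ∀ Mi : Set (FAtom S C), IsStableModel (Pstar P σ edb i) Mi →
      ∀ M : Set (FAtom S C),
        IsStableModel (ofFacts Mi ∪ Ponly P σ (i + 1)) M →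
        IsStableModel (Pstar P σ edb (i + 1)) M) ∧
    (∀ k : ℕ, (∀ r ∈ P, σ r.head.p ≤ k) →
      ∀ M : ℕ → Set (FAtom S C),
        IsStableModel (Pstar P σ edb 0) (M 0) →
        (∀ i : ℕ, IsStableModel (ofFacts (M i) ∪ Ponly P σ (i + 1)) (M (i + 1))) →
        IsStableModel (foe P edb) (M k)) := by
  refine ⟨fun i Mi hMi M hM => hMi.Pstar_succ hstrat hM, fun k hk M h0 hsucc => ?_⟩
  have hstable : ∀ j, IsStableModel (Pstar P σ edb j) (M j) :=
    fun j => Nat.rec h0 (fun j ih => ih.Pstar_succ hstrat (hsucc j)) j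
  exact foe_eq_Pstar hk ▸ hstable k

/-- Let `P` be a stratified choice program (stratified by
`σ` once its choice goals are removed).  (1) If `Mᵢ` is a stable model of
`Pᵢ*`, then every stable model of `Mᵢ ∪ P_{i+1}` is a stable model of
`P_{i+1}*`.  (2) Consequently the stable models of `P` are computed stratum
by stratum by the iterated (choice) fixpoint procedure: if all strata of `P`
are `≤ k`, `M 0` is a stable model of `P₀*` and each `M (i+1)` is a stable
model of `M i ∪ P_{i+1}`, then `M k` is a stable model of `foe(P)`. -/
theorem stratified_choice_program_iterated_fixpoint
    {S : Schema} {C : Type} [Finite S.pred] [Finite C]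
    (P : CProgram S C) (σ : S.pred → ℕ) (hstrat : StratifiedBy P σ)
    (edb : Set (GAtom S C)) :
    (∀ i : ℕ, ∀ Mi : Set (FAtom S C), IsStableModel (Pstar P σ edb i) Mi →
      ∀ M : Set (FAtom S C),
        IsStableModel (ofFacts Mi ∪ Ponly P σ (i + 1)) M →
        IsStableModel (Pstar P σ edb (i + 1)) M) ∧
    (∀ k : ℕ, (∀ r ∈ P, σ r.head.p ≤ k) →
      ∀ M : ℕ → Set (FAtom S C),
        IsStableModel (Pstar P σ edb 0) (M 0) →
        (∀ i : ℕ, IsStableModel (ofFacts (M i) ∪ Ponly P σ (i + 1)) (M (i + 1))) →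
        IsStableModel (foe P edb) (M k)) :=
  stratified_choice_program_iterated_fixpoint_general P σ hstrat edb
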